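/- Let A_l ∈ ℂ^{n_l×n_l}, B_l ∈ ℂ^{n_l×m_l}, C_l ∈ ℂ^{m_l×n_l} and A_r ∈ ℂ^{n_r×n_r}, B_r ∈ ℂ^{n_r×m_r}, C_r ∈ ℂ^{m_r×n_r}. Define 𝐀_o = [[A_l ⊗ I_{m_r}, (B_l ⊗ I_{m_r})(I_{m_l} ⊗ C_r)],[0, I_{m_l} ⊗ A_r]], 𝐁_o = [B_l ⊗ I_{m_r} ; I_{m_l} ⊗ B_r], 𝐂_o = [C_l ⊗ I_{m_r} I_{m_l} ⊗ C_r]. Let T be an invertible (n_lm_r+m_ln_r)×(n_lm_r+m_ln_r) matrix and set 𝐀 = T^{-1}𝐀_oT, 𝐁 = T^{-1}𝐁_o, 𝐂 = 𝐂_oT. Let u ∈ ℂ^{m_r}, v ∈ ℂ^{m_l} with u*u = 1, v*v = 1, and define Π̂₁ = T^{-1} diag(I_{n_l} ⊗ uu*, 0_{m_ln_r}) T and Π̂₂ = T^{-1} diag(0_{n_lm_r}, vv* ⊗ I_{n_r}) T. Then for every z ∈ ℂ such that zI_{n_l} − A_l and zI_{n_r} − A_r are invertible, the matrix 𝐅(z)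 = I_{m_lm_r} + 𝐂(zI_{n_lm_r+m_ln_r} − 𝐀)^{-1}𝐁 satisfies the tensor factorization 𝐅(z) = F_l(z) ⊗ F_r(z), where F_l(z) = (I_{m_l} ⊗ u*) 𝐂 Π̂₁ (zI − 𝐀)^{-1} Π̂₁ 𝐁 (I_{m_l} ⊗ u) + I_{m_l} and F_r(z) = (v* ⊗ I_{m_r}) 𝐂 Π̂₂ (zI − 𝐀)^{-1} Π̂₂ 𝐁 (v ⊗ I_{m_r}) + I_{m_r}. -/

import Mathlib

/-!
Conjugating a realization by `T` leaves `I + C (zI − A)⁻¹ B` unchanged and conjugates the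
resolvent, so one may take `T = I`. Then `zI − 𝐀_o` is block upper triangular with diagonal
blocks `(zI − A_l) ⊗ I` and `I ⊗ (zI − A_r)`, and the off-diagonal block of its inverse is
`(zI − A_l)⁻¹B_l ⊗ C_r(zI − A_r)⁻¹`. Writing `H = C (zI − A)⁻¹ B`, this gives
`𝐂_o (zI − 𝐀_o)⁻¹ 𝐁_o = H_l ⊗ I + H_l ⊗ H_r + I ⊗ H_r = (I + H_l) ⊗ (I + H_r) − I`.
The projection `Π̂₁` (resp. `Π̂₂`) keeps only the first (resp. second) diagonal block of the
resolvent, and the unit vector `u` (resp. `v`) contracts away the spare Kronecker factor,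
leaving `F_l = I + H_l` and `F_r = I + H_r`.
-/

open Matrix
open scoped Kronecker

namespace Matrix

variable {R l m n o p q k : Type*}

theorem sub_kronecker [NonUnitalNonAssocRing R] (A₁ A₂ : Matrix l m R) (B : Matrix n p R) :
    (A₁ - A₂) ⊗ₖ B = A₁ ⊗ₖ B - A₂ ⊗ₖ B := by
  ext; simp [sub_mul]

theorem kronecker_sub [NonUnitalNonAssocRing R] (A : Matrix l m R) (B₁ B₂ : Matrix n p R) :
    A ⊗ₖ (B₁ - B₂) = A ⊗ₖ B₁ - A ⊗ₖ B₂ := by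
  ext; simp [mul_sub]

theorem fromBlocks_sub [Sub R] (A A' : Matrix n l R) (B B' : Matrix n m R)
    (C C' : Matrix o l R) (D D' : Matrix o m R) :
    fromBlocks A B C D - fromBlocks A' B' C' D' =
      fromBlocks (A - A') (B - B') (C - C') (D - D') := by
  ext (i | i) (j | j) <;> rfl

theorem reindex_prodUnique_kronecker_one [MulZeroOneClass R] [Unique k] [DecidableEq k]
    (X : Matrix m n R) :
    reindex (Equiv.prodUnique m k) (Equiv.prodUnique n k) (X ⊗ₖ (1 : Matrix k k R)) = X := by
  ext; simp

theorem reindex_uniqueProd_one_kronecker [MulZeroOneClass R] [Unique k] [DecidableEq k]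
    (X : Matrix m n R) :
    reindex (Equiv.uniqueProd m k) (Equiv.uniqueProd n k) ((1 : Matrix k k R) ⊗ₖ X) = X := by
  ext; simp

section Conj

variable [CommRing R] [Fintype n] [DecidableEq n] {T : Matrix n n R}

theorem smul_one_sub_conj (hT : IsUnit T.det) (z : R) (A : Matrix n n R) :
    z • 1 - T⁻¹ * A * T = T⁻¹ * (z • 1 - A) * T := by
  rw [Matrix.mul_sub, Matrix.sub_mul, Matrix.mul_smul, Matrix.smul_mul, Matrix.mul_one,
    nonsing_inv_mul _ hT]

theorem inv_conj (hT : IsUnit T.det) (M : Matrix n n R) : (T⁻¹ * M * T)⁻¹ = T⁻¹ * M⁻¹ * T := by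
  rw [mul_inv_rev, mul_inv_rev, nonsing_inv_nonsing_inv _ hT, Matrix.mul_assoc]

theorem mul_conj_resolvent_conj_mul [Fintype p] [Fintype q] (hT : IsUnit T.det)
    (X : Matrix k p R) (C : Matrix p n R) (E A : Matrix n n R) (B : Matrix n q R)
    (Y : Matrix q l R) (z : R) :
    X * (C * T) * (T⁻¹ * E * T) * (z • 1 - T⁻¹ * A * T)⁻¹ * (T⁻¹ * E * T) * (T⁻¹ * B) * Y
      = X * C * E * (z • 1 - A)⁻¹ * E * B * Y := by
  rw [smul_one_sub_conj hT, inv_conj hT]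
  simp only [Matrix.mul_assoc, mul_nonsing_inv_cancel_left _ _ hT]

end Conj

section Realization

variable [CommRing R] [Fintype n] [DecidableEq n] [DecidableEq m]

noncomputable def transferMatrix (A : Matrix n n R) (B : Matrix n m R) (C : Matrix m n R)
    (z : R) : Matrix m m R :=
  1 + C * (z • 1 - A)⁻¹ * B

theorem transferMatrix_conj {T : Matrix n n R} (hT : IsUnit T.det) (A : Matrix n n R)
    (B : Matrix n m R) (C : Matrix m n R) (z : R) :
    transferMatrix (T⁻¹ * A * T) (T⁻¹ * B) (C * T) z = transferMatrix A B C z := by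
  rw [transferMatrix, transferMatrix, smul_one_sub_conj hT, inv_conj hT]
  simp only [Matrix.mul_assoc, mul_nonsing_inv_cancel_left _ _ hT]

end Realization

section TensorRealization

variable [CommRing R] {nl ml nr mr : Type*} [Fintype nl] [Fintype ml] [Fintype nr] [Fintype mr]
  [DecidableEq nl] [DecidableEq ml] [DecidableEq nr] [DecidableEq mr]

def tensorRealizationA (Al : Matrix nl nl R) (Bl : Matrix nl ml R) (Ar : Matrix nr nr R)
    (Cr : Matrix mr nr R) : Matrix (nl × mr ⊕ ml × nr) (nl × mr ⊕ ml × nr) R :=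
  fromBlocks (Al ⊗ₖ (1 : Matrix mr mr R))
    ((Bl ⊗ₖ (1 : Matrix mr mr R)) * ((1 : Matrix ml ml R) ⊗ₖ Cr)) 0 ((1 : Matrix ml ml R) ⊗ₖ Ar)

def tensorRealizationB (Bl : Matrix nl ml R) (Br : Matrix nr mr R) :
    Matrix (nl × mr ⊕ ml × nr) (ml × mr) R :=
  fromRows (Bl ⊗ₖ 1) (1 ⊗ₖ Br)

def tensorRealizationC (Cl : Matrix ml nl R) (Cr : Matrix mr nr R) :
    Matrix (ml × mr) (nl × mr ⊕ ml × nr) R :=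
  fromCols (Cl ⊗ₖ 1) (1 ⊗ₖ Cr)

variable {Al : Matrix nl nl R} {Bl : Matrix nl ml R} {Cl : Matrix ml nl R}
  {Ar : Matrix nr nr R} {Br : Matrix nr mr R} {Cr : Matrix mr nr R} {z : R}

theorem inv_smul_one_sub_tensorRealizationA (hl : IsUnit (z • 1 - Al))
    (hr : IsUnit (z • 1 - Ar)) :
    (z • 1 - tensorRealizationA Al Bl Ar Cr)⁻¹ =
      fromBlocks ((z • 1 - Al)⁻¹ ⊗ₖ 1) (((z • 1 - Al)⁻¹ * Bl) ⊗ₖ (Cr * (z • 1 - Ar)⁻¹)) 0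
        (1 ⊗ₖ (z • 1 - Ar)⁻¹) := by
  have hblocks : z • 1 - tensorRealizationA Al Bl Ar Cr =
      fromBlocks ((z • 1 - Al) ⊗ₖ (1 : Matrix mr mr R))
        (-((Bl ⊗ₖ (1 : Matrix mr mr R)) * ((1 : Matrix ml ml R) ⊗ₖ Cr))) 0
        ((1 : Matrix ml ml R) ⊗ₖ (z • 1 - Ar)) := by
    rw [tensorRealizationA, ← fromBlocks_one, fromBlocks_smul, fromBlocks_sub, sub_kronecker,
      kronecker_sub, smul_kronecker, kronecker_smul, one_kronecker_one, one_kronecker_one,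
      smul_zero, smul_zero, zero_sub, sub_zero]
  have hunits : IsUnit ((z • 1 - Al) ⊗ₖ (1 : Matrix mr mr R)) ↔
      IsUnit ((1 : Matrix ml ml R) ⊗ₖ (z • 1 - Ar)) :=
    iff_of_true (Matrix.IsUnit.kronecker hl isUnit_one) (Matrix.IsUnit.kronecker isUnit_one hr)
  rw [hblocks, inv_fromBlocks_zero₂₁_of_isUnit_iff _ _ _ hunits, inv_kronecker, inv_kronecker,
    inv_one, inv_one]
  simp only [Matrix.mul_neg, Matrix.neg_mul, neg_neg, ← mul_kronecker_mul, Matrix.mul_one,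
    Matrix.one_mul]

theorem transferMatrix_tensorRealization (hl : IsUnit (z • 1 - Al))
    (hr : IsUnit (z • 1 - Ar)) :
    transferMatrix (tensorRealizationA Al Bl Ar Cr) (tensorRealizationB Bl Br)
        (tensorRealizationC Cl Cr) z =
      transferMatrix Al Bl Cl z ⊗ₖ transferMatrix Ar Br Cr z := by
  rw [transferMatrix, inv_smul_one_sub_tensorRealizationA hl hr, tensorRealizationB,
    tensorRealizationC, fromCols_mul_fromBlocks, fromCols_mul_fromRows]
  simp only [transferMatrix, ← mul_kronecker_mul, Matrix.mul_zero, add_zero, Matrix.one_mul,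
    Matrix.mul_one, add_kronecker, kronecker_add, one_kronecker_one, Matrix.add_mul,
    Matrix.mul_assoc]
  abel

theorem compress_fst_tensorRealization [Fintype k] [DecidableEq k] {u : Matrix mr k R}
    {w : Matrix k mr R} (hwu : w * u = 1) (hl : IsUnit (z • 1 - Al)) (hr : IsUnit (z • 1 - Ar)) :
    ((1 : Matrix ml ml R) ⊗ₖ w) * tensorRealizationC Cl Cr *
        fromBlocks ((1 : Matrix nl nl R) ⊗ₖ (u * w)) 0 0 (0 : Matrix (ml × nr) (ml × nr) R) *
        (z • 1 - tensorRealizationA Al Bl Ar Cr)⁻¹ *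
        fromBlocks ((1 : Matrix nl nl R) ⊗ₖ (u * w)) 0 0 (0 : Matrix (ml × nr) (ml × nr) R) *
        tensorRealizationB Bl Br * ((1 : Matrix ml ml R) ⊗ₖ u) =
      (Cl * (z • 1 - Al)⁻¹ * Bl) ⊗ₖ (1 : Matrix k k R) := by
  rw [inv_smul_one_sub_tensorRealizationA hl hr, tensorRealizationB, tensorRealizationC]
  simp only [fromCols_mul_fromBlocks, fromCols_mul_fromRows, Matrix.mul_zero, Matrix.zero_mul,
    add_zero, ← mul_kronecker_mul, Matrix.mul_assoc, Matrix.one_mul, Matrix.mul_one, hwu]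

theorem compress_snd_tensorRealization [Fintype k] [DecidableEq k] {v : Matrix ml k R}
    {w : Matrix k ml R} (hwv : w * v = 1) (hl : IsUnit (z • 1 - Al)) (hr : IsUnit (z • 1 - Ar)) :
    (w ⊗ₖ (1 : Matrix mr mr R)) * tensorRealizationC Cl Cr *
        fromBlocks (0 : Matrix (nl × mr) (nl × mr) R) 0 0 ((v * w) ⊗ₖ (1 : Matrix nr nr R)) *
        (z • 1 - tensorRealizationA Al Bl Ar Cr)⁻¹ *
        fromBlocks (0 : Matrix (nl × mr) (nl × mr) R) 0 0 ((v * w) ⊗ₖ (1 : Matrix nr nr R)) *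
        tensorRealizationB Bl Br * (v ⊗ₖ (1 : Matrix mr mr R)) =
      (1 : Matrix k k R) ⊗ₖ (Cr * (z • 1 - Ar)⁻¹ * Br) := by
  rw [inv_smul_one_sub_tensorRealizationA hl hr, tensorRealizationB, tensorRealizationC]
  simp only [fromCols_mul_fromBlocks, fromCols_mul_fromRows, Matrix.mul_zero, Matrix.zero_mul,
    add_zero, zero_add, ← mul_kronecker_mul, Matrix.mul_assoc, Matrix.one_mul, Matrix.mul_one, hwv]

end TensorRealization

end Matrix

/-- Tensor factorization of a rational function normalized to the identity at infinity:
with `𝐀 = T⁻¹𝐀_o T`, `𝐁 = T⁻¹𝐁_o`, `𝐂 = 𝐂_o T` built from the inflated realization of a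
tensor product, unit vectors `u ∈ ℂ^{m_r}`, `v ∈ ℂ^{m_l}`, and the projections
`Π̂₁ = T⁻¹ diag(I ⊗ uu*, 0) T`, `Π̂₂ = T⁻¹ diag(0, vv* ⊗ I) T`, for every `z` where
`zI − A_l` and `zI − A_r` are invertible, the function
`𝐅(z) = I + 𝐂(zI − 𝐀)⁻¹𝐁` factors as `𝐅(z) = F_l(z) ⊗ F_r(z)` with
`F_l(z) = (I ⊗ u*) 𝐂 Π̂₁ (zI − 𝐀)⁻¹ Π̂₁ 𝐁 (I ⊗ u) + I` and
`F_r(z) = (v* ⊗ I) 𝐂 Π̂₂ (zI − 𝐀)⁻¹ Π̂₂ 𝐁 (v ⊗ I) + I`. -/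
theorem tensor_factorization (nl nr ml mr : ℕ)
    (Al : Matrix (Fin nl) (Fin nl) ℂ) (Bl : Matrix (Fin nl) (Fin ml) ℂ)
    (Cl : Matrix (Fin ml) (Fin nl) ℂ)
    (Ar : Matrix (Fin nr) (Fin nr) ℂ) (Br : Matrix (Fin nr) (Fin mr) ℂ)
    (Cr : Matrix (Fin mr) (Fin nr) ℂ)
    (T : Matrix ((Fin nl × Fin mr) ⊕ (Fin ml × Fin nr))
        ((Fin nl × Fin mr) ⊕ (Fin ml × Fin nr)) ℂ) (hT : IsUnit T)
    (u : Matrix (Fin mr) (Fin 1) ℂ) (v : Matrix (Fin ml) (Fin 1) ℂ)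
    (hu : uᴴ * u = 1) (hv : vᴴ * v = 1)
    (z : ℂ)
    (hl : IsUnit (z • (1 : Matrix (Fin nl) (Fin nl) ℂ) - Al))
    (hr : IsUnit (z • (1 : Matrix (Fin nr) (Fin nr) ℂ) - Ar)) :
    let Ao := fromBlocks (Al ⊗ₖ (1 : Matrix (Fin mr) (Fin mr) ℂ))
        ((Bl ⊗ₖ (1 : Matrix (Fin mr) (Fin mr) ℂ)) * ((1 : Matrix (Fin ml) (Fin ml) ℂ) ⊗ₖ Cr))
        0 ((1 : Matrix (Fin ml) (Fin ml) ℂ) ⊗ₖ Ar)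
    let Bo := fromRows (Bl ⊗ₖ (1 : Matrix (Fin mr) (Fin mr) ℂ))
        ((1 : Matrix (Fin ml) (Fin ml) ℂ) ⊗ₖ Br)
    let Co := fromCols (Cl ⊗ₖ (1 : Matrix (Fin mr) (Fin mr) ℂ))
        ((1 : Matrix (Fin ml) (Fin ml) ℂ) ⊗ₖ Cr)
    let A := T⁻¹ * Ao * T
    let B := T⁻¹ * Bo
    let C := Co * T
    let Ph1 := T⁻¹ * fromBlocks ((1 : Matrix (Fin nl) (Fin nl) ℂ) ⊗ₖ (u * uᴴ)) 0 0
        (0 : Matrix (Fin ml × Fin nr) (Fin ml × Fin nr) ℂ) * T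
    let Ph2 := T⁻¹ * fromBlocks (0 : Matrix (Fin nl × Fin mr) (Fin nl × Fin mr) ℂ) 0 0
        ((v * vᴴ) ⊗ₖ (1 : Matrix (Fin nr) (Fin nr) ℂ)) * T
    let Fl := Matrix.reindex (Equiv.prodUnique (Fin ml) (Fin 1))
        (Equiv.prodUnique (Fin ml) (Fin 1))
        (((1 : Matrix (Fin ml) (Fin ml) ℂ) ⊗ₖ uᴴ) * C * Ph1 *
          (z • 1 - A)⁻¹ * Ph1 * B * ((1 : Matrix (Fin ml) (Fin ml) ℂ) ⊗ₖ u)) + 1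
    let Fr := Matrix.reindex (Equiv.uniqueProd (Fin mr) (Fin 1))
        (Equiv.uniqueProd (Fin mr) (Fin 1))
        ((vᴴ ⊗ₖ (1 : Matrix (Fin mr) (Fin mr) ℂ)) * C * Ph2 *
          (z • 1 - A)⁻¹ * Ph2 * B * (v ⊗ₖ (1 : Matrix (Fin mr) (Fin mr) ℂ))) + 1
    (1 : Matrix (Fin ml × Fin mr) (Fin ml × Fin mr) ℂ) + C * (z • 1 - A)⁻¹ * B
      = Fl ⊗ₖ Fr := by
  intro Ao Bo Co A B C Ph1 Ph2 Fl Fr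
  have hT' : IsUnit T.det := (isUnit_iff_isUnit_det T).mp hT
  have hAo : Ao = tensorRealizationA Al Bl Ar Cr := rfl
  have hBo : Bo = tensorRealizationB Bl Br := rfl
  have hCo : Co = tensorRealizationC Cl Cr := rfl
  have hFl : Fl = transferMatrix Al Bl Cl z := by
    simp only [Fl, C, Ph1, A, B, hAo, hBo, hCo]
    rw [mul_conj_resolvent_conj_mul hT', compress_fst_tensorRealization hu hl hr,
      reindex_prodUnique_kronecker_one, add_comm, transferMatrix]
  have hFr : Fr = transferMatrix Ar Br Cr z := by
    simp only [Fr, C, Ph2, A, B, hAo, hBo, hCo]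
    rw [mul_conj_resolvent_conj_mul hT', compress_snd_tensorRealization hv hl hr,
      reindex_uniqueProd_one_kronecker, add_comm, transferMatrix]
  rw [hFl, hFr, ← transferMatrix_tensorRealization hl hr, ← transferMatrix_conj hT']
  rfl
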